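/- Fix an initial susceptance b̃ ∈ ℝ, an initial number of circuits γ̃ > 0, voltage angles θ_i, θ_j ∈ ℝ with |θ_i − θ_j| ≤ Θ for some Θ ≥ 0, and a nonempty finite set C ⊆ ℕ of candidate circuit additions with minimum element c_min and maximum element c_max. Define the candidate flow values a(c) = (1 + c/γ̃)·b̃·(θ_i − θ_j) for c ∈ C, and set M := ((c_max − c_min)/γ̃)·|b̃|·Θ. Then for all c, c′ ∈ C one has |a(c) − a(c′)| = (|c − c′|/γ̃)·|b̃|·|θ_i − θ_j| ≤ M, and consequently, for every f ∈ ℝ, there exists Γ : C → ℝ taking only values 0 and 1 with ∑_{c ∈ C} Γ(c) = 1 satisfying a(c) − f ≥ (Γ(c) − 1)·M and a(c) − f ≤ (1 − Γ(c))·M for all c ∈ C if and only if f = (1 + c/γ̃)·b̃·(θ_i − θ_j) for some c ∈ C. -/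

import Mathlib

/-!
Two candidate flows differ by `((c - c')/γ̃)·b̃·(θ_i − θ_j)`, so their spread is at most
`((c_max − c_min)/γ̃)·|b̃|·Θ = M`. In the big-M system the candidate with `Γ(c) = 1` is pinned to
`a(c) = f`, while for every other candidate the constraint only asks `|a(c') − f| ≤ M`, which
this bound on the spread makes automatic once `f` is itself a candidate flow.
-/

open Finset

section BigM

variable {ι R : Type*} [CommRing R] [LinearOrder R] [IsStrictOrderedRing R]

/-- Feasibility of the big-M disjunctive relaxation of `f ∈ a '' s` with constant `M`. -/
def BigMFeasible (s : Finset ι) (a : ι → R) (M f : R) : Prop :=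
  ∃ Γ : ι → R, (∀ c ∈ s, Γ c = 0 ∨ Γ c = 1) ∧ (∑ c ∈ s, Γ c = 1) ∧
    ∀ c ∈ s, a c - f ≥ (Γ c - 1) * M ∧ a c - f ≤ (1 - Γ c) * M

theorem BigMFeasible.exists_eq {s : Finset ι} {a : ι → R} {M f : R}
    (h : BigMFeasible s a M f) : ∃ c ∈ s, f = a c := by
  obtain ⟨Γ, hbin, hsum, hineq⟩ := h
  obtain ⟨c, hc, hΓc⟩ := exists_ne_zero_of_sum_ne_zero (hsum ▸ one_ne_zero : ∑ c ∈ s, Γ c ≠ 0)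
  have hΓc : Γ c = 1 := (hbin c hc).resolve_left hΓc
  obtain ⟨hge, hle⟩ := hineq c hc
  rw [hΓc, sub_self, zero_mul] at hge hle
  exact ⟨c, hc, by linarith⟩

theorem bigMFeasible_of_eq [DecidableEq ι] {s : Finset ι} {a : ι → R} {M : R}
    (hM : ∀ c ∈ s, ∀ c' ∈ s, |a c - a c'| ≤ M) {c : ι} (hc : c ∈ s) :
    BigMFeasible s a M (a c) := by
  refine ⟨fun c' => if c' = c then 1 else 0, fun c' _ => ?_, by simp [hc], fun c' hc' => ?_⟩
  · by_cases h : c' = c <;> simp [h]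
  · by_cases h : c' = c
    · simp [h]
    · obtain ⟨hlo, hhi⟩ := abs_le.mp (hM c' hc' c hc)
      simp only [h, if_false, zero_sub, neg_one_mul, sub_zero, one_mul]
      exact ⟨hlo, hhi⟩

theorem bigMFeasible_iff_exists_eq [DecidableEq ι] {s : Finset ι} {a : ι → R} {M : R}
    (hM : ∀ c ∈ s, ∀ c' ∈ s, |a c - a c'| ≤ M) (f : R) :
    BigMFeasible s a M f ↔ ∃ c ∈ s, f = a c := by
  refine ⟨BigMFeasible.exists_eq, ?_⟩
  rintro ⟨c, hc, rfl⟩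
  exact bigMFeasible_of_eq hM hc

end BigM

theorem Finset.abs_sub_le_max'_sub_min' {s : Finset ℕ} (hs : s.Nonempty) {c c' : ℕ}
    (hc : c ∈ s) (hc' : c' ∈ s) :
    |(c : ℝ) - c'| ≤ (s.max' hs : ℝ) - s.min' hs := by
  have h₁ : (c : ℝ) ≤ s.max' hs := mod_cast s.le_max' c hc
  have h₂ : (c' : ℝ) ≤ s.max' hs := mod_cast s.le_max' c' hc'
  have h₃ : (s.min' hs : ℝ) ≤ c := mod_cast s.min'_le c hc
  have h₄ : (s.min' hs : ℝ) ≤ c' := mod_cast s.min'_le c' hc'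
  rw [abs_sub_le_iff]
  constructor <;> linarith

section CandidateFlow

variable {γ b t : ℝ}

theorem abs_candidateFlow_sub (hγ : 0 < γ) (x y : ℝ) :
    |(1 + x / γ) * b * t - (1 + y / γ) * b * t| = |x - y| / γ * |b| * |t| := by
  have h : (1 + x / γ) * b * t - (1 + y / γ) * b * t = (x - y) / γ * b * t := by
    field_simp
    ring
  rw [h, abs_mul, abs_mul, abs_div, abs_of_pos hγ]

theorem abs_candidateFlow_sub_le (hγ : 0 < γ) {x y D Θ : ℝ} (hD : |x - y| ≤ D) (ht : |t| ≤ Θ) :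
    |(1 + x / γ) * b * t - (1 + y / γ) * b * t| ≤ D / γ * |b| * Θ := by
  have hD₀ : 0 ≤ D := (abs_nonneg _).trans hD
  rw [abs_candidateFlow_sub hγ]
  gcongr

end CandidateFlow

theorem bigM_explicit_constant_general
    (btil : ℝ) (γtil : ℝ) (hγ : 0 < γtil)
    (θi θj Θ : ℝ) (hΘ : |θi - θj| ≤ Θ)
    (C : Finset ℕ) (hC : C.Nonempty) :
    (∀ c ∈ C, ∀ c' ∈ C,
      |(1 + (c : ℝ) / γtil) * btil * (θi - θj)
        - (1 + (c' : ℝ) / γtil) * btil * (θi - θj)|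
      = (|(c : ℝ) - (c' : ℝ)| / γtil) * |btil| * |θi - θj| ∧
      |(1 + (c : ℝ) / γtil) * btil * (θi - θj)
        - (1 + (c' : ℝ) / γtil) * btil * (θi - θj)|
      ≤ (((C.max' hC : ℝ) - (C.min' hC : ℝ)) / γtil) * |btil| * Θ) ∧
    (∀ f : ℝ,
      (∃ Γ : ℕ → ℝ,
        (∀ c ∈ C, Γ c = 0 ∨ Γ c = 1) ∧
        (∑ c ∈ C, Γ c = 1) ∧
        (∀ c ∈ C,
          (1 + (c : ℝ) / γtil) * btil * (θi - θj) - f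
            ≥ (Γ c - 1) * ((((C.max' hC : ℝ) - (C.min' hC : ℝ)) / γtil) * |btil| * Θ) ∧
          (1 + (c : ℝ) / γtil) * btil * (θi - θj) - f
            ≤ (1 - Γ c) * ((((C.max' hC : ℝ) - (C.min' hC : ℝ)) / γtil) * |btil| * Θ))) ↔
      (∃ c ∈ C, f = (1 + (c : ℝ) / γtil) * btil * (θi - θj))) := by
  have spread : ∀ c ∈ C, ∀ c' ∈ C,
      |(1 + (c : ℝ) / γtil) * btil * (θi - θj) - (1 + (c' : ℝ) / γtil) * btil * (θi - θj)|
        ≤ (((C.max' hC : ℝ) - (C.min' hC : ℝ)) / γtil) * |btil| * Θ :=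
    fun c hc c' hc' =>
      abs_candidateFlow_sub_le hγ (C.abs_sub_le_max'_sub_min' hC hc hc') hΘ
  refine ⟨fun c hc c' hc' => ⟨abs_candidateFlow_sub hγ _ _, spread c hc c' hc'⟩, fun f => ?_⟩
  exact bigMFeasible_iff_exists_eq (a := fun c : ℕ => (1 + (c : ℝ) / γtil) * btil * (θi - θj))
    spread f

/-- Explicit valid big-M constant for the transmission expansion flow
constraint: with `M = ((c_max − c_min)/γ̃)·|b̃|·Θ`, the pairwise deviations of
the candidate flow values `a c = (1 + c/γ̃)·b̃·(θ_i − θ_j)` are bounded by `M`,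
and the big-M system is exactly equivalent to the disjunction of the exact
flow equalities. -/
theorem bigM_explicit_constant
    (btil : ℝ) (γtil : ℝ) (hγ : 0 < γtil)
    (θi θj Θ : ℝ) (hΘ0 : 0 ≤ Θ) (hΘ : |θi - θj| ≤ Θ)
    (C : Finset ℕ) (hC : C.Nonempty) :
    (∀ c ∈ C, ∀ c' ∈ C,
      |(1 + (c : ℝ) / γtil) * btil * (θi - θj)
        - (1 + (c' : ℝ) / γtil) * btil * (θi - θj)|
      = (|(c : ℝ) - (c' : ℝ)| / γtil) * |btil| * |θi - θj| ∧
      |(1 + (c : ℝ) / γtil) * btil * (θi - θj)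
        - (1 + (c' : ℝ) / γtil) * btil * (θi - θj)|
      ≤ (((C.max' hC : ℝ) - (C.min' hC : ℝ)) / γtil) * |btil| * Θ) ∧
    (∀ f : ℝ,
      (∃ Γ : ℕ → ℝ,
        (∀ c ∈ C, Γ c = 0 ∨ Γ c = 1) ∧
        (∑ c ∈ C, Γ c = 1) ∧
        (∀ c ∈ C,
          (1 + (c : ℝ) / γtil) * btil * (θi - θj) - f
            ≥ (Γ c - 1) * ((((C.max' hC : ℝ) - (C.min' hC : ℝ)) / γtil) * |btil| * Θ) ∧
          (1 + (c : ℝ) / γtil) * btil * (θi - θj) - f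
            ≤ (1 - Γ c) * ((((C.max' hC : ℝ) - (C.min' hC : ℝ)) / γtil) * |btil| * Θ))) ↔
      (∃ c ∈ C, f = (1 + (c : ℝ) / γtil) * btil * (θi - θj))) :=
  bigM_explicit_constant_general btil γtil hγ θi θj Θ hΘ C hC
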